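/- Let G = ℤ² ⋊_A ℤ where A = [[1, n], [0, 1]] ∈ SL₂(ℤ) with n ≠ 0. Then any length function l : G → [0,∞) vanishes on the element (1,0) ∈ ℤ² (the eigenvector direction of A). -/

import Mathlib

/-!
Conjugating `c = ι (0,1)` by `t^k` gives `ι (kn, 1)`, which commutes with `c`, so the commutator
`[t^k, c] = ι (1,0) ^ (kn)` has length at most `2 l(c)` for every `k`. Since
`l (ι (1,0) ^ (kn)) = k |n| l (ι (1,0))`, this forces `l (ι (1,0)) = 0`.
-/

open Matrix

section LengthFunction

variable {G : Type*} [Group G] {l : G → ℝ}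

theorem length_inv (hpow : ∀ (g : G) (k : ℤ), l (g ^ k) = |(k : ℝ)| * l g) (g : G) :
    l g⁻¹ = l g := by
  simpa using hpow g (-1)

theorem length_conj_mul_inv_le (hpow : ∀ (g : G) (k : ℤ), l (g ^ k) = |(k : ℝ)| * l g)
    (hconj : ∀ a g : G, l (a * g * a⁻¹) = l g)
    (hcomm : ∀ a b : G, a * b = b * a → l (a * b) ≤ l a + l b)
    {y c : G} (h : Commute (y * c * y⁻¹) c⁻¹) :
    l (y * c * y⁻¹ * c⁻¹) ≤ 2 * l c :=
  calc l (y * c * y⁻¹ * c⁻¹) ≤ l (y * c * y⁻¹) + l c⁻¹ := hcomm _ _ h.eq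
    _ = 2 * l c := by rw [hconj, length_inv hpow]; ring

theorem length_eq_zero_of_forall_zpow_le (hpow : ∀ (g : G) (k : ℤ), l (g ^ k) = |(k : ℝ)| * l g)
    {g : G} (hg : 0 ≤ l g) {m : ℤ} (hm : m ≠ 0) {C : ℝ}
    (h : ∀ k : ℕ, l (g ^ ((k : ℤ) * m)) ≤ C) : l g = 0 := by
  by_contra hne
  have hpos : 0 < |(m : ℝ)| * l g :=
    mul_pos (abs_pos.mpr (Int.cast_ne_zero.mpr hm)) (lt_of_le_of_ne hg (Ne.symm hne))
  obtain ⟨k, hk⟩ := exists_nat_gt (C / (|(m : ℝ)| * l g))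
  have hle := h k
  rw [hpow, Int.cast_mul, Int.cast_natCast, abs_mul, Nat.abs_cast, mul_assoc] at hle
  linarith [(div_lt_iff₀ hpos).mp hk]

end LengthFunction

section Homomorphism

variable {A G : Type*} [Group G] {ι : A → G}

theorem map_zsmul_of_map_add [AddGroup A] (hι : ∀ v w : A, ι (v + w) = ι v * ι w) (k : ℤ)
    (v : A) : ι (k • v) = ι v ^ k :=
  (AddMonoidHom.mk' (fun v => Additive.ofMul (ι v)) hι).map_zsmul k v

theorem commute_of_map_add [AddCommGroup A] (hι : ∀ v w : A, ι (v + w) = ι v * ι w) (v w : A) :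
    Commute (ι v) (ι w) := by
  rw [Commute, SemiconjBy, ← hι, ← hι, add_comm]

theorem pow_conj_eq_of_conj {σ : A → A} {t : G} (ht : ∀ v, t * ι v * t⁻¹ = ι (σ v)) (k : ℕ)
    (v : A) : t ^ k * ι v * (t ^ k)⁻¹ = ι (σ^[k] v) := by
  induction k generalizing v with
  | zero => simp
  | succ k ih =>
    rw [Function.iterate_succ_apply, ← ih, ← ht, pow_succ, _root_.mul_inv_rev]
    group

end Homomorphism

theorem parabolic_mulVec_iterate (n : ℤ) (k : ℕ) :
    (!![1, n; 0, 1] *ᵥ ·)^[k] ![0, 1] = ((k : ℤ) * n) • ![1, 0] + ![0, 1] := by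
  induction k with
  | zero => simp
  | succ k ih =>
    rw [Function.iterate_succ_apply', ih]
    ext i
    fin_cases i <;> simp [mulVec, dotProduct, Fin.sum_univ_two]; ring

theorem length_function_vanishes_on_eigenvector_parabolic_general
    {G : Type*} [Group G] (n : ℤ) (hn : n ≠ 0)
    (ι : (Fin 2 → ℤ) → G) (hι : ∀ v w : Fin 2 → ℤ, ι (v + w) = ι v * ι w)
    (t : G)
    (ht : ∀ v : Fin 2 → ℤ, t * ι v * t⁻¹ = ι ((!![1, n; 0, 1] : Matrix (Fin 2) (Fin 2) ℤ).mulVec v))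
    (l : G → ℝ)
    (hnonneg : ∀ g : G, 0 ≤ l g)
    (hpow : ∀ (g : G) (k : ℤ), l (g ^ k) = |(k : ℝ)| * l g)
    (hconj : ∀ a g : G, l (a * g * a⁻¹) = l g)
    (hcomm : ∀ a b : G, a * b = b * a → l (a * b) ≤ l a + l b) :
    l (ι ![1, 0]) = 0 := by
  refine length_eq_zero_of_forall_zpow_le hpow (hnonneg _) hn (C := 2 * l (ι ![0, 1])) fun k => ?_
  have hconj_k : t ^ k * ι ![0, 1] * (t ^ k)⁻¹ = ι (((k : ℤ) * n) • ![1, 0] + ![0, 1]) := by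
    rw [pow_conj_eq_of_conj (σ := (!![1, n; 0, 1] *ᵥ ·)) ht, parabolic_mulVec_iterate]
  calc l (ι ![1, 0] ^ ((k : ℤ) * n))
      = l (t ^ k * ι ![0, 1] * (t ^ k)⁻¹ * (ι ![0, 1])⁻¹) := by
        rw [hconj_k, hι, map_zsmul_of_map_add hι, mul_inv_cancel_right]
    _ ≤ 2 * l (ι ![0, 1]) := by
        refine length_conj_mul_inv_le hpow hconj hcomm ?_
        rw [hconj_k]
        exact (commute_of_map_add hι _ _).inv_right

/-- In the semidirect product `ℤ² ⋊_A ℤ` with `A = [[1, n], [0, 1]]`, `n ≠ 0`, any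
length function vanishes on the eigenvector `(1,0) ∈ ℤ²` of `A`. -/
theorem length_function_vanishes_on_eigenvector_parabolic
    {G : Type*} [Group G] (n : ℤ) (hn : n ≠ 0)
    (ι : (Fin 2 → ℤ) → G) (hι : ∀ v w : Fin 2 → ℤ, ι (v + w) = ι v * ι w)
    (hinj : Function.Injective ι)
    (t : G)
    (ht : ∀ v : Fin 2 → ℤ, t * ι v * t⁻¹ = ι ((!![1, n; 0, 1] : Matrix (Fin 2) (Fin 2) ℤ).mulVec v))
    (l : G → ℝ)
    (hnonneg : ∀ g : G, 0 ≤ l g)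
    (hpow : ∀ (g : G) (k : ℤ), l (g ^ k) = |(k : ℝ)| * l g)
    (hconj : ∀ a g : G, l (a * g * a⁻¹) = l g)
    (hcomm : ∀ a b : G, a * b = b * a → l (a * b) ≤ l a + l b) :
    l (ι ![1, 0]) = 0 :=
  length_function_vanishes_on_eigenvector_parabolic_general n hn ι hι t ht l hnonneg hpow hconj
    hcomm
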